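/- Let X be a Type I space with a slicer. Consider the conditions: (b) any two closed unbounded subsets of X have closed unbounded intersection; (e) every continuous real-valued function on X is eventually constant (constant outside some X_α); (f) every closed unbounded subset of X is a direction in itself; (h) X is a direction in itself. Then (b) implies (f), (e) implies (h), and (f) implies (b). -/

import Mathlib

open Set Topology

noncomputable section

universe u

/-- The ordinal ω₁. -/
def omega1 : Ordinal.{0} := (Cardinal.aleph 1).ord

theorem omega1_pos : (0 : Ordinal.{0}) < omega1 := by
  have := Cardinal.ord_lt_ord.mpr (Cardinal.aleph_pos 1)
  simpa [omega1, Cardinal.ord_zero] using this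

theorem omega1_isLimit : Order.IsSuccLimit omega1 := by
  first
  | exact Ordinal.isSuccLimit_ord (Cardinal.aleph0_le_aleph 1)
  | exact Cardinal.isSuccLimit_ord (Cardinal.aleph0_le_aleph 1)

/-- ω₁ as a type (the set of countable ordinals). -/
def W : Type 1 := {a : Ordinal.{0} // a < omega1}

instance : LinearOrder W := by unfold W; infer_instance
instance : TopologicalSpace W := Preorder.topology W
instance : OrderTopology W := ⟨rfl⟩

def w0 : W := ⟨0, omega1_pos⟩
def Wsucc (a : W) : W := ⟨Order.succ a.1, omega1_isLimit.succ_lt a.2⟩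

/-- The closed long ray: ω₁ × [0,1) with the lexicographic order topology. -/
def LongRay : Type 1 := W ×ₗ ↥(Set.Ico (0:ℝ) 1)

instance : LinearOrder LongRay := by unfold LongRay; infer_instance
instance : TopologicalSpace LongRay := Preorder.topology LongRay
instance : OrderTopology LongRay := ⟨rfl⟩

/-- Embedding of ω₁ into the long ray as the points (α, 0). -/
def iW (a : W) : LongRay := toLex (a, ⟨0, le_rfl, one_pos⟩)
def lrZero : LongRay := iW w0

/-- A subset of ω₁ is unbounded. -/
def WUnbounded (S : Set W) : Prop := ∀ a : W, ∃ b ∈ S, a < b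
/-- A subset of ω₁ is closed (in the order sense). -/
def WClosed (S : Set W) : Prop :=
  ∀ a : W, (∃ b, b < a) → (∀ b, b < a → ∃ c ∈ S, b < c ∧ c < a) → a ∈ S
def WClub (S : Set W) : Prop := WClosed S ∧ WUnbounded S
def WStationary (A : Set W) : Prop := ∀ C : Set W, WClub C → (A ∩ C).Nonempty

/-- A Type I space structure on `X`. -/
structure TypeI (X : Type u) [TopologicalSpace X] where
  seq : W → Set X
  isOpen : ∀ a, IsOpen (seq a)
  lindelof : ∀ a, IsLindelof (closure (seq a))
  mono : ∀ a b : W, a < b → closure (seq a) ⊆ seq b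
  covers : ∀ x : X, ∃ a, x ∈ seq a

variable {X : Type u} [TopologicalSpace X]

/-- A subset is bounded if contained in some `X_α`. -/
def TypeI.Bdd (hT : TypeI X) (A : Set X) : Prop := ∃ a, A ⊆ hT.seq a
/-- Club: closed and unbounded. -/
def TypeI.Club (hT : TypeI X) (A : Set X) : Prop := IsClosed A ∧ ¬ hT.Bdd A
/-- A predirection: an unbounded set such that any function unbounded on it is
unbounded on every unbounded subset of it. -/
def TypeI.Predirection (hT : TypeI X) (D : Set X) : Prop :=
  ¬ hT.Bdd D ∧ ∀ f : X → LongRay, Continuous f → ¬ BddAbove (f '' D) →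
    ∀ A ⊆ D, ¬ hT.Bdd A → ¬ BddAbove (f '' A)
/-- A direction: a closed predirection. -/
def TypeI.IsDirection (hT : TypeI X) (D : Set X) : Prop := IsClosed D ∧ hT.Predirection D
/-- The bones. -/
def TypeI.bone (hT : TypeI X) (a : W) : Set X := closure (hT.seq a) \ hT.seq a
/-- The sequence is canonical. -/
def TypeI.Canonical (hT : TypeI X) : Prop :=
  ∀ a : W, Order.IsSuccLimit a.1 → hT.seq a = ⋃ b ∈ {b : W | b < a}, hT.seq b
/-- A slicer. -/
def TypeI.Slicer (hT : TypeI X) (s : X → LongRay) : Prop :=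
  Continuous s ∧ ∀ a : W, ∀ x ∈ closure (hT.seq (Wsucc a)) \ hT.seq a,
    s x ∈ Set.Icc (iW a) (iW (Wsucc a))

/-- ω-bounded: closures of countable sets are compact. -/
def OmegaBounded (X : Type u) [TopologicalSpace X] : Prop :=
  ∀ S : Set X, S.Countable → IsCompact (closure S)
/-- ω₁-compact: no uncountable closed discrete subset. -/
def Omega1Compact (X : Type u) [TopologicalSpace X] : Prop :=
  ∀ C : Set X, IsClosed C → DiscreteTopology C → C.Countable
/-- Countably tight. -/
def CountablyTight (X : Type u) [TopologicalSpace X] : Prop :=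
  ∀ (A : Set X) (x : X), x ∈ closure A → ∃ B ⊆ A, B.Countable ∧ x ∈ closure B

/-- A club C (with its induced Type I structure) is a direction in itself. -/
def DirInItself {X : Type u} [TopologicalSpace X] (hT : TypeI X) (C : Set X) : Prop :=
  ∀ f : ↥C → LongRay, Continuous f → ¬ BddAbove (Set.range f) →
    ∃ a : W, ∀ x : ↥C, f x = lrZero → (x : X) ∈ hT.seq a


section Helpers

lemma lr_lt_iff (y z : LongRay) : y < z ↔ (ofLex y).1 < (ofLex z).1 ∨
    ((ofLex y).1 = (ofLex z).1 ∧ (ofLex y).2 < (ofLex z).2) :=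
  Prod.Lex.lt_iff

lemma lr_le_iff (y z : LongRay) : y ≤ z ↔ (ofLex y).1 < (ofLex z).1 ∨
    ((ofLex y).1 = (ofLex z).1 ∧ (ofLex y).2 ≤ (ofLex z).2) :=
  Prod.Lex.le_iff

lemma w0_le (a : W) : w0 ≤ a := by
  show (w0 : W).1 ≤ a.1
  exact zero_le

lemma lt_wsucc (a : W) : a < Wsucc a := by
  show a.1 < Order.succ a.1
  exact Order.lt_succ _

lemma lt_wsucc_iff {a b : W} : a < Wsucc b ↔ a ≤ b := by
  show a.1 < Order.succ b.1 ↔ a.1 ≤ b.1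
  exact Order.lt_succ_iff

lemma lrZero_le (y : LongRay) : lrZero ≤ y := by
  rw [lrZero, lr_le_iff]
  rcases eq_or_lt_of_le (w0_le (ofLex y).1) with h | h
  · exact Or.inr ⟨h, (ofLex y).2.2.1⟩
  · exact Or.inl h

lemma lt_iW_iff {u : LongRay} {a : W} : u < iW a ↔ (ofLex u).1 < a := by
  rw [lr_lt_iff]
  constructor
  · rintro (h | ⟨h1, h2⟩)
    · exact h
    · exact absurd h2 (not_lt.2 (ofLex u).2.2.1)
  · exact Or.inl

lemma iW_lt_iff {a : W} {u : LongRay} :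
    iW a < u ↔ a < (ofLex u).1 ∨ (a = (ofLex u).1 ∧ (0:ℝ) < ((ofLex u).2 : ℝ)) := by
  rw [lr_lt_iff]
  apply or_congr Iff.rfl
  exact and_congr Iff.rfl Iff.rfl

lemma iW_le_iW {a b : W} (h : a ≤ b) : iW a ≤ iW b := by
  rw [lr_le_iff]
  rcases eq_or_lt_of_le h with h | h
  · exact Or.inr ⟨h, le_rfl⟩
  · exact Or.inl h

lemma iW_lt_iW {a b : W} : iW a < iW b ↔ a < b := by
  rw [lt_iW_iff]; rfl

lemma countable_bddAbove_W {S : Set W} (h : S.Countable) : ∃ b : W, ∀ a ∈ S, a ≤ b := by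
  rcases S.eq_empty_or_nonempty with rfl | hne
  · exact ⟨w0, by simp⟩
  obtain ⟨f, rfl⟩ := Set.Countable.exists_eq_range h hne
  have hlt : ∀ n : ℕ, (f n).1 < omega1 := fun n => (f n).2
  have hsup : (⨆ n, (f n).1) < omega1 :=
    by have e : omega1 = Ordinal.omega 1 := Cardinal.ord_aleph 1; exact lt_of_lt_of_eq (Ordinal.iSup_lt_omega_one (fun n => lt_of_lt_of_eq (hlt n) e)) e.symm
  refine ⟨⟨_, hsup⟩, ?_⟩
  rintro a ⟨n, rfl⟩
  show (f n).1 ≤ _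
  exact Ordinal.le_iSup (fun n => (f n).1) n

lemma bddAbove_of_isLindelof {S : Set LongRay} (h : IsLindelof S) : BddAbove S := by
  obtain ⟨r, hrc, hrs⟩ := h.elim_countable_subcover (fun b : W => Iio (iW b))
    (fun _ => isOpen_Iio) (by
      intro y _
      exact mem_iUnion.2 ⟨Wsucc (ofLex y).1, lt_iW_iff.2 (lt_wsucc _)⟩)
  obtain ⟨b, hb⟩ := countable_bddAbove_W hrc
  refine ⟨iW b, fun y hy => ?_⟩
  obtain ⟨c, hc, hyc⟩ := mem_iUnion₂.1 (hrs hy)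
  exact le_of_lt (lt_of_lt_of_le hyc (iW_le_iW (hb c hc)))

end Helpers


section Helpers2

variable {X : Type u} [TopologicalSpace X]

lemma TypeI.seq_mono_le (hT : TypeI X) {a b : W} (h : a ≤ b) : hT.seq a ⊆ hT.seq b := by
  rcases eq_or_lt_of_le h with rfl | h
  · exact subset_rfl
  · exact subset_closure.trans (hT.mono _ _ h)

lemma TypeI.unbdd_exists (hT : TypeI X) {A : Set X} (h : ¬ hT.Bdd A) (a : W) :
    ∃ x ∈ A, x ∉ hT.seq a := by
  by_contra hc
  push_neg at hc
  exact h ⟨a, hc⟩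

lemma TypeI.unbdd_diff (hT : TypeI X) {A : Set X} (h : ¬ hT.Bdd A) (a : W) :
    ¬ hT.Bdd (A \ hT.seq a) := by
  rintro ⟨b, hb⟩
  refine h ⟨max a b, fun x hx => ?_⟩
  by_cases hxa : x ∈ hT.seq a
  · exact hT.seq_mono_le (le_max_left a b) hxa
  · exact hT.seq_mono_le (le_max_right a b) (hb ⟨hx, hxa⟩)

lemma TypeI.bddAbove_image_closure (hT : TypeI X) {C : Set X} (hC : IsClosed C)
    {f : ↥C → LongRay} (hf : Continuous f) (a : W) :
    BddAbove (f '' (Subtype.val ⁻¹' closure (hT.seq a))) := by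
  apply bddAbove_of_isLindelof
  apply IsLindelof.image _ hf
  rw [Subtype.isLindelof_iff, Set.image_preimage_eq_inter_range, Subtype.range_coe]
  exact (hT.lindelof a).inter_right hC

lemma TypeI.unbdd_Ici (hT : TypeI X) {C : Set X} (hC : IsClosed C)
    {f : ↥C → LongRay} (hf : Continuous f) (hunb : ¬ BddAbove (Set.range f)) (u : LongRay) :
    ¬ hT.Bdd (Subtype.val '' (f ⁻¹' Ici u)) := by
  rintro ⟨a, ha⟩
  obtain ⟨t₀, ht₀⟩ := hT.bddAbove_image_closure hC hf a
  apply hunb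
  refine ⟨max u t₀, ?_⟩
  rintro y ⟨x, rfl⟩
  by_cases h : u ≤ f x
  · have hx : (x : X) ∈ hT.seq a := ha ⟨x, h, rfl⟩
    have : f x ≤ t₀ := ht₀ ⟨x, subset_closure hx, rfl⟩
    exact le_trans this (le_max_right _ _)
  · exact le_trans (le_of_not_ge h) (le_max_left _ _)

lemma clopen_in_union {A B : Set X} (hA : IsClosed A) (hB : IsClosed B)
    (hd : A ∩ B = ∅) : IsClopen {x : ↥(A ∪ B) | (x : X) ∈ A} := by
  have hcompl : {x : ↥(A ∪ B) | (x : X) ∈ A}ᶜ = Subtype.val ⁻¹' B := by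
    ext x
    simp only [Set.mem_compl_iff, Set.mem_setOf_eq, Set.mem_preimage]
    constructor
    · intro hx
      rcases x.2 with h | h
      · exact absurd h hx
      · exact h
    · intro hx hxa
      exact Set.eq_empty_iff_forall_notMem.1 hd (x : X) ⟨hxa, hx⟩
  constructor
  · exact hA.preimage continuous_subtype_val
  · rw [← isClosed_compl_iff, hcompl]
    exact hB.preimage continuous_subtype_val

end Helpers2


section Helpers3

variable {X : Type u} [TopologicalSpace X]

lemma glue_continuous {A B : Set X} (hA : IsClosed A) (hB : IsClosed B)
    (hd : A ∩ B = ∅) (g : ↥(A ∪ B) → LongRay)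
    (hg : Continuous g) [∀ x : ↥(A ∪ B), Decidable ((x : X) ∈ A)] :
    Continuous (fun x : ↥(A ∪ B) => if (x : X) ∈ A then lrZero else g x) := by
  apply Continuous.if _ continuous_const hg
  intro x hx
  rw [(clopen_in_union hA hB hd).frontier_eq] at hx
  exact absurd hx (Set.notMem_empty x)

end Helpers3


section PartBF

variable {X : Type u} [TopologicalSpace X]

lemma lrZero_lt_u : lrZero < iW (Wsucc w0) := iW_lt_iW.2 (lt_wsucc w0)

lemma part_bf (hT : TypeI X)
    (hb : ∀ A B : Set X, hT.Club A → hT.Club B → hT.Club (A ∩ B))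
    (C : Set X) (hC : hT.Club C) : DirInItself hT C := by
  intro f hfc hunb
  by_contra h0
  push_neg at h0
  set Z : Set X := Subtype.val '' (f ⁻¹' {lrZero}) with hZdef
  have hZclosed : IsClosed Z :=
    hC.1.isClosedEmbedding_subtypeVal.isClosedMap _ (isClosed_singleton.preimage hfc)
  have hZunb : ¬ hT.Bdd Z := by
    rintro ⟨a, ha⟩
    obtain ⟨x, hx0, hxa⟩ := h0 a
    exact hxa (ha ⟨x, hx0, rfl⟩)
  set u := iW (Wsucc w0) with hu
  set S : Set X := Subtype.val '' (f ⁻¹' Ici u) with hSdef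
  have hSclosed : IsClosed S :=
    hC.1.isClosedEmbedding_subtypeVal.isClosedMap _ (isClosed_Ici.preimage hfc)
  have hSunb : ¬ hT.Bdd S := hT.unbdd_Ici hC.1 hfc hunb u
  have hclub := hb Z S ⟨hZclosed, hZunb⟩ ⟨hSclosed, hSunb⟩
  obtain ⟨x, hxZS, -⟩ := hT.unbdd_exists hclub.2 w0
  obtain ⟨hxZ, hxS⟩ := hxZS
  obtain ⟨x1, hx1, hv1⟩ := hxZ
  obtain ⟨x2, hx2, hv2⟩ := hxS
  have hx12 : x2 = x1 := Subtype.ext (hv2.trans hv1.symm)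
  rw [hx12] at hx2
  rw [Set.mem_preimage, Set.mem_singleton_iff] at hx1
  rw [Set.mem_preimage, Set.mem_Ici, hx1] at hx2
  exact absurd hx2 (not_le.2 lrZero_lt_u)

end PartBF


section Rho

/-- Clamp function on the long ray: the real coordinate below `iW (Wsucc w0)`, and `1` above. -/
noncomputable def rho (y : LongRay) : ℝ :=
  if y < iW (Wsucc w0) then ((ofLex y).2 : ℝ) else 1

lemma rho_nonneg (y : LongRay) : 0 ≤ rho y := by
  unfold rho; split
  · exact (ofLex y).2.2.1
  · exact zero_le_one

lemma rho_le_one (y : LongRay) : rho y ≤ 1 := by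
  unfold rho; split
  · exact le_of_lt (ofLex y).2.2.2
  · exact le_rfl

lemma rho_zero : rho lrZero = 0 := by
  unfold rho; rw [if_pos lrZero_lt_u]; rfl

lemma rho_of_not_lt {y : LongRay} (h : ¬ y < iW (Wsucc w0)) : rho y = 1 := if_neg h

lemma rho_of_lt {y : LongRay} (h : y < iW (Wsucc w0)) : rho y = ((ofLex y).2 : ℝ) := if_pos h

lemma fst_eq_w0_of_lt {y : LongRay} (h : y < iW (Wsucc w0)) : (ofLex y).1 = w0 :=
  le_antisymm (lt_wsucc_iff.1 (lt_iW_iff.1 h)) (w0_le _)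

lemma rho_continuous : Continuous rho := by
  rw [(inferInstance : OrderTopology ℝ).topology_eq_generate_intervals,
    continuous_generateFrom_iff]
  rintro s ⟨v, rfl | rfl⟩
  · -- preimage of Ioi v
    rcases lt_or_ge v 0 with hv0 | hv0
    · have : rho ⁻¹' Ioi v = univ :=
        Set.eq_univ_of_forall fun y => lt_of_lt_of_le hv0 (rho_nonneg y)
      rw [this]; exact isOpen_univ
    rcases lt_or_ge v 1 with hv1 | hv1
    · have : rho ⁻¹' Ioi v = Ioi (toLex (w0, ⟨v, Set.mem_Ico.2 ⟨hv0, hv1⟩⟩)) := by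
        ext y
        simp only [Set.mem_preimage, Set.mem_Ioi]
        by_cases h : y < iW (Wsucc w0)
        · rw [rho_of_lt h]; refine Iff.trans ?_ (lr_lt_iff _ _).symm
          have hw : (ofLex y).1 = w0 := fst_eq_w0_of_lt h
          constructor
          · intro hvy
            exact Or.inr ⟨hw.symm, Subtype.mk_lt_mk.2 hvy⟩
          · rintro (hlt | ⟨-, hlt⟩)
            · rw [hw] at hlt; exact absurd hlt (lt_irrefl _)
            · exact hlt
        · rw [rho_of_not_lt h]
          constructor
          · intro _
            refine lt_of_lt_of_le ?_ (not_lt.1 h)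
            refine (lr_lt_iff _ _).2 ?_
            exact Or.inl (lt_wsucc w0)
          · intro _; exact hv1
      rw [this]; exact isOpen_Ioi
    · have : rho ⁻¹' Ioi v = ∅ := by
        ext y
        simp only [Set.mem_preimage, Set.mem_Ioi, Set.mem_empty_iff_false, iff_false, not_lt]
        exact le_trans (rho_le_one y) hv1
      rw [this]; exact isOpen_empty
  · -- preimage of Iio v
    rcases le_or_gt v 0 with hv0 | hv0
    · have : rho ⁻¹' Iio v = ∅ := by
        ext y
        simp only [Set.mem_preimage, Set.mem_Iio, Set.mem_empty_iff_false, iff_false, not_lt]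
        exact le_trans hv0 (rho_nonneg y)
      rw [this]; exact isOpen_empty
    rcases lt_or_ge v 1 with hv1 | hv1
    · have : rho ⁻¹' Iio v = Iio (toLex (w0, ⟨v, Set.mem_Ico.2 ⟨le_of_lt hv0, hv1⟩⟩)) := by
        ext y
        simp only [Set.mem_preimage, Set.mem_Iio]
        by_cases h : y < iW (Wsucc w0)
        · rw [rho_of_lt h]; refine Iff.trans ?_ (lr_lt_iff _ _).symm
          have hw : (ofLex y).1 = w0 := fst_eq_w0_of_lt h
          constructor
          · intro hvy
            exact Or.inr ⟨hw, Subtype.mk_lt_mk.2 hvy⟩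
          · rintro (hlt | ⟨-, hlt⟩)
            · rw [hw] at hlt; exact absurd hlt (lt_irrefl _)
            · exact hlt
        · rw [rho_of_not_lt h]
          constructor
          · intro h1; exact absurd hv1 (not_lt.2 (le_of_lt h1))
          · intro hlt
            exfalso
            apply h
            refine lt_trans hlt ?_
            refine (lr_lt_iff _ _).2 ?_
            exact Or.inl (lt_wsucc w0)
      rw [this]; exact isOpen_Iio
    rcases lt_or_ge 1 v with hv1' | hv1'
    · have : rho ⁻¹' Iio v = univ :=
        Set.eq_univ_of_forall fun y => lt_of_le_of_lt (rho_le_one y) hv1'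
      rw [this]; exact isOpen_univ
    · have hv : v = 1 := le_antisymm hv1' hv1
      subst hv
      have : rho ⁻¹' Iio 1 = Iio (iW (Wsucc w0)) := by
        ext y
        simp only [Set.mem_preimage, Set.mem_Iio]
        constructor
        · intro h1
          by_contra h
          rw [rho_of_not_lt h] at h1
          exact absurd h1 (lt_irrefl _)
        · intro h
          rw [rho_of_lt h]
          exact (ofLex y).2.2.2
      rw [this]; exact isOpen_Iio

end Rho


section PartEH

variable {X : Type u} [TopologicalSpace X]

lemma part_eh (hT : TypeI X)
    (he : ∀ g : X → ℝ, Continuous g → ∃ (a : W) (c : ℝ), ∀ x ∉ hT.seq a, g x = c) :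
    DirInItself hT Set.univ := by
  intro f hfc hunb
  by_contra h0
  push_neg at h0
  have hmk : ∀ x : ↥(Set.univ : Set X), (⟨(x : X), Set.mem_univ _⟩ : ↥(Set.univ : Set X)) = x :=
    fun x => Subtype.ext rfl
  set g : X → ℝ := fun x => rho (f ⟨x, Set.mem_univ x⟩) with hg
  have hgc : Continuous g :=
    rho_continuous.comp (hfc.comp (Continuous.subtype_mk continuous_id _))
  obtain ⟨a, c, hac⟩ := he g hgc
  obtain ⟨x, hx0, hxa⟩ := h0 a
  have hc0 : c = 0 := by
    have h1 : g (x : X) = 0 := by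
      rw [hg]; simp only []
      rw [hmk x, hx0, rho_zero]
    rw [← hac (x : X) hxa, h1]
  have hSunb : ¬ hT.Bdd (Subtype.val '' (f ⁻¹' Ici (iW (Wsucc w0)))) :=
    hT.unbdd_Ici isClosed_univ hfc hunb _
  obtain ⟨y, hyS, hya⟩ := hT.unbdd_exists hSunb a
  obtain ⟨y', hy', rfl⟩ := hyS
  have hc1 : c = 1 := by
    have h1 : g (y' : X) = 1 := by
      rw [hg]; simp only []
      rw [hmk y']
      exact rho_of_not_lt (not_lt.2 hy')
    rw [← hac (y' : X) hya, h1]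
  rw [hc0] at hc1
  exact zero_ne_one hc1

end PartEH


section Lev

instance : WellFoundedLT W := inferInstanceAs (WellFoundedLT {a : Ordinal.{0} // a < omega1})

variable {X : Type u} [TopologicalSpace X]

/-- The least level at which a point appears. -/
noncomputable def TypeI.lev (hT : TypeI X) (x : X) : W :=
  (wellFounded_lt (α := W)).min {a | x ∈ hT.seq a} ⟨(hT.covers x).choose, (hT.covers x).choose_spec⟩

lemma TypeI.lev_mem (hT : TypeI X) (x : X) : x ∈ hT.seq (hT.lev x) :=
  (wellFounded_lt (α := W)).min_mem {a | x ∈ hT.seq a}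
    ⟨(hT.covers x).choose, (hT.covers x).choose_spec⟩

lemma TypeI.lev_le_iff (hT : TypeI X) {x : X} {c : W} : hT.lev x ≤ c ↔ x ∈ hT.seq c := by
  constructor
  · intro h
    exact hT.seq_mono_le h (hT.lev_mem x)
  · intro h
    exact le_of_not_gt fun hlt => (wellFounded_lt (α := W)).not_lt_min _ h hlt

lemma TypeI.lt_lev_iff (hT : TypeI X) {x : X} {c : W} : c < hT.lev x ↔ x ∉ hT.seq c := by
  rw [← hT.lev_le_iff, not_le]

end Lev

section LevFun

variable {X : Type u} [TopologicalSpace X]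

lemma compl_preimage_union {A B : Set X} (hd : A ∩ B = ∅) :
    ({x : ↥(A ∪ B) | (x : X) ∈ A})ᶜ = Subtype.val ⁻¹' B := by
  ext x
  simp only [Set.mem_compl_iff, Set.mem_setOf_eq, Set.mem_preimage]
  constructor
  · intro hx
    rcases x.2 with h | h
    · exact absurd h hx
    · exact h
  · intro hx hxa
    exact Set.eq_empty_iff_forall_notMem.1 hd (x : X) ⟨hxa, hx⟩

lemma levfun_continuous (hT : TypeI X) {A B : Set X} (hA : IsClosed A) (hB : IsClosed B)
    (hd : A ∩ B = ∅) (hBkey : ∀ c : W, B ∩ closure (hT.seq c) ⊆ hT.seq c)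
    [∀ x : ↥(A ∪ B), Decidable ((x : X) ∈ A)] :
    Continuous (fun x : ↥(A ∪ B) => if (x : X) ∈ A then lrZero else iW (hT.lev (x : X))) := by
  set F := fun x : ↥(A ∪ B) => if (x : X) ∈ A then lrZero else iW (hT.lev (x : X)) with hF
  have hclA : IsClopen {x : ↥(A ∪ B) | (x : X) ∈ A} := clopen_in_union hA hB hd
  have hopenB : IsOpen (Subtype.val ⁻¹' B : Set ↥(A ∪ B)) := by
    rw [← compl_preimage_union hd]
    exact hclA.isClosed.isOpen_compl
  have hmemB : ∀ x : ↥(A ∪ B), (x : X) ∉ A → (x : X) ∈ B := by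
    intro x hx
    rcases x.2 with h | h
    · exact absurd h hx
    · exact h
  have hnotA : ∀ x : ↥(A ∪ B), (x : X) ∈ B → (x : X) ∉ A := by
    intro x hx hxa
    exact Set.eq_empty_iff_forall_notMem.1 hd (x : X) ⟨hxa, hx⟩
  rw [(inferInstance : OrderTopology LongRay).topology_eq_generate_intervals,
    continuous_generateFrom_iff]
  rintro s ⟨v, rfl | rfl⟩
  · -- preimage of Ioi v
    have : F ⁻¹' Ioi v =
        (Subtype.val ⁻¹' B) ∩ (Subtype.val ⁻¹' (closure (hT.seq (ofLex v).1))ᶜ) := by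
      ext x
      simp only [Set.mem_preimage, Set.mem_Ioi, Set.mem_inter_iff, Set.mem_compl_iff, hF]
      by_cases hxA : (x : X) ∈ A
      · rw [if_pos hxA]
        constructor
        · intro h
          exact absurd (lrZero_le v) (not_le.2 h)
        · rintro ⟨hxB, -⟩
          exact absurd hxA (hnotA x hxB)
      · rw [if_neg hxA]
        have hxB := hmemB x hxA
        constructor
        · intro h
          refine ⟨hxB, fun hcl => ?_⟩
          have hseq : (x : X) ∈ hT.seq (ofLex v).1 := hBkey _ ⟨hxB, hcl⟩
          have : hT.lev (x : X) ≤ (ofLex v).1 := hT.lev_le_iff.2 hseq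
          exact absurd (lt_iW_iff.1 h) (not_lt.2 this)
        · rintro ⟨-, hcl⟩
          have hxseq : (x : X) ∉ hT.seq (ofLex v).1 := fun h => hcl (subset_closure h)
          exact lt_iW_iff.2 (hT.lt_lev_iff.2 hxseq)
    rw [this]
    exact hopenB.inter (isClosed_closure.isOpen_compl.preimage continuous_subtype_val)
  · -- preimage of Iio v
    rcases eq_or_lt_of_le ((ofLex v).2.2.1 : (0:ℝ) ≤ ((ofLex v).2 : ℝ)) with hr | hr
    · -- second coordinate of v is zero
      rcases eq_or_lt_of_le (w0_le (ofLex v).1) with hb | hb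
      · -- v = lrZero, preimage is empty
        have : F ⁻¹' Iio v = ∅ := by
          ext x
          simp only [Set.mem_preimage, Set.mem_Iio, Set.mem_empty_iff_false, iff_false, not_lt, hF]
          have hsnd : ((ofLex v).2 : ℝ) ≤ (0 : ℝ) := le_of_eq hr.symm
          by_cases hxA : (x : X) ∈ A
          · rw [if_pos hxA, lr_le_iff]
            exact Or.inr ⟨hb.symm, hsnd⟩
          · rw [if_neg hxA, lr_le_iff]
            rcases eq_or_lt_of_le (w0_le (hT.lev (x : X))) with h | h
            · exact Or.inr ⟨hb.symm.trans h, hsnd⟩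
            · exact Or.inl (lt_of_le_of_lt (le_of_eq hb.symm) h)
        rw [this]
        exact isOpen_empty
      · -- w0 < b
        have : F ⁻¹' Iio v = {x : ↥(A ∪ B) | (x : X) ∈ A} ∪
            ((Subtype.val ⁻¹' B) ∩ (Subtype.val ⁻¹' (⋃ c ∈ Set.Iio (ofLex v).1, hT.seq c))) := by
          ext x
          simp only [Set.mem_preimage, Set.mem_Iio, Set.mem_union, Set.mem_inter_iff,
            Set.mem_setOf_eq, Set.mem_iUnion, exists_prop, hF]
          by_cases hxA : (x : X) ∈ A
          · rw [if_pos hxA]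
            constructor
            · intro _; exact Or.inl hxA
            · intro _
              rw [lrZero, lr_lt_iff]
              exact Or.inl hb
          · rw [if_neg hxA]
            have hxB := hmemB x hxA
            constructor
            · intro h
              refine Or.inr ⟨hxB, hT.lev (x : X), ?_, hT.lev_mem (x : X)⟩
              rcases iW_lt_iff.1 h with h' | ⟨h1, h2⟩
              · exact h'
              · rw [← hr] at h2
                exact absurd h2 (lt_irrefl _)
            · rintro (hxA' | ⟨-, c, hc, hxc⟩)
              · exact absurd hxA' hxA
              · have : hT.lev (x : X) < (ofLex v).1 := lt_of_le_of_lt (hT.lev_le_iff.2 hxc) hc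
                exact iW_lt_iff.2 (Or.inl this)
        rw [this]
        refine hclA.isOpen.union (hopenB.inter ?_)
        exact (isOpen_biUnion fun c _ => hT.isOpen c).preimage continuous_subtype_val
    · -- second coordinate of v is positive
      have : F ⁻¹' Iio v = {x : ↥(A ∪ B) | (x : X) ∈ A} ∪
          ((Subtype.val ⁻¹' B) ∩ (Subtype.val ⁻¹' hT.seq (ofLex v).1)) := by
        ext x
        simp only [Set.mem_preimage, Set.mem_Iio, Set.mem_union, Set.mem_inter_iff,
          Set.mem_setOf_eq, hF]
        have hlrv : lrZero < v := by
          rw [lrZero, lr_lt_iff]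
          rcases eq_or_lt_of_le (w0_le (ofLex v).1) with h | h
          · refine Or.inr ⟨h, ?_⟩
            show ((0:ℝ) : ℝ) < ((ofLex v).2 : ℝ)
            exact hr
          · exact Or.inl h
        by_cases hxA : (x : X) ∈ A
        · rw [if_pos hxA]
          constructor
          · intro _; exact Or.inl hxA
          · intro _; exact hlrv
        · rw [if_neg hxA]
          have hxB := hmemB x hxA
          constructor
          · intro h
            refine Or.inr ⟨hxB, ?_⟩
            rcases iW_lt_iff.1 h with h' | ⟨h1, -⟩
            · exact hT.lev_le_iff.1 (le_of_lt h') 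
            · exact hT.lev_le_iff.1 (le_of_eq h1)
          · rintro (hxA' | ⟨-, hxc⟩)
            · exact absurd hxA' hxA
            · rcases eq_or_lt_of_le (hT.lev_le_iff.2 hxc) with h | h
              · exact iW_lt_iff.2 (Or.inr ⟨h, hr⟩)
              · exact iW_lt_iff.2 (Or.inl h)
      rw [this]
      refine hclA.isOpen.union (hopenB.inter ?_)
      exact (hT.isOpen _).preimage continuous_subtype_val

end LevFun

section PartFB

variable {X : Type u} [TopologicalSpace X]

lemma TypeI.bdd_mono (hT : TypeI X) {A B : Set X} (h : A ⊆ B) (hB : hT.Bdd B) : hT.Bdd A := by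
  obtain ⟨a, ha⟩ := hB
  exact ⟨a, h.trans ha⟩

lemma part_fb (hT : TypeI X) (hsl : ∃ s : X → LongRay, hT.Slicer s)
    (hf : ∀ C : Set X, hT.Club C → DirInItself hT C)
    (A B : Set X) (hA : hT.Club A) (hB : hT.Club B) : hT.Club (A ∩ B) := by
  refine ⟨hA.1.inter hB.1, ?_⟩
  rintro ⟨a₀, hab⟩
  obtain ⟨s, hs_cont, hs_prop⟩ := hsl
  haveI : ∀ (P : Prop), Decidable P := fun P => Classical.dec P
  by_cases hsb : BddAbove (s '' (B \ hT.seq a₀))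
  · -- Case 2: s is bounded on B \ seq a₀; use the level function
    obtain ⟨t, ht⟩ := hsb
    set a₂ : W := max a₀ (Wsucc (ofLex t).1) with ha₂
    have hta₂ : t < iW a₂ := by
      refine lt_of_lt_of_le ?_ (iW_le_iW (le_max_right _ _))
      exact lt_iW_iff.2 (lt_wsucc _)
    set A₁ : Set X := A \ hT.seq a₂ with hA₁
    set B₁ : Set X := B \ hT.seq a₂ with hB₁
    have hd : A₁ ∩ B₁ = ∅ := by
      rw [Set.eq_empty_iff_forall_notMem]
      rintro x ⟨⟨hxA, hxn⟩, ⟨hxB, -⟩⟩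
      exact hxn (hT.seq_mono_le (le_max_left _ _) (hab ⟨hxA, hxB⟩))
    have hA₁c : IsClosed A₁ := hA.1.sdiff (hT.isOpen a₂)
    have hB₁c : IsClosed B₁ := hB.1.sdiff (hT.isOpen a₂)
    have hA₁u : ¬ hT.Bdd A₁ := hT.unbdd_diff hA.2 a₂
    have hB₁u : ¬ hT.Bdd B₁ := hT.unbdd_diff hB.2 a₂
    have hst : ∀ y ∈ B₁, s y ≤ t := by
      rintro y ⟨hyB, hyn⟩
      refine ht ⟨y, ⟨hyB, fun hy => hyn (hT.seq_mono_le (le_max_left _ _) hy)⟩, rfl⟩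
    have hBkey : ∀ c : W, B₁ ∩ closure (hT.seq c) ⊆ hT.seq c := by
      intro c x hx
      obtain ⟨⟨hxB, hxna₂⟩, hxcl⟩ := hx
      by_cases hca : c < a₂
      · exact absurd (hT.mono c a₂ hca hxcl) hxna₂
      · by_contra hxc
        have hxcl' : x ∈ closure (hT.seq (Wsucc c)) :=
          closure_mono (hT.seq_mono_le (le_of_lt (lt_wsucc c))) hxcl
        have hsx := (hs_prop c x ⟨hxcl', hxc⟩).1
        have h1 : s x ≤ t := hst x ⟨hxB, hxna₂⟩
        have h2 : iW a₂ ≤ iW c := iW_le_iW (not_lt.1 hca)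
        exact absurd (le_trans hsx h1) (not_le.2 (lt_of_lt_of_le hta₂ h2))
    set F := fun x : ↥(A₁ ∪ B₁) => if (x : X) ∈ A₁ then lrZero else iW (hT.lev (x : X)) with hFdef
    have hFc : Continuous F := levfun_continuous hT hA₁c hB₁c hd hBkey
    have hFu : ¬ BddAbove (Set.range F) := by
      rintro ⟨v, hv⟩
      obtain ⟨x, hxB₁, hxn⟩ := hT.unbdd_exists hB₁u (ofLex v).1
      have hxA₁ : x ∉ A₁ := fun hxA₁ =>
        Set.eq_empty_iff_forall_notMem.1 hd x ⟨hxA₁, hxB₁⟩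
      have hFx : F ⟨x, Or.inr hxB₁⟩ = iW (hT.lev x) := if_neg hxA₁
      have hle : F ⟨x, Or.inr hxB₁⟩ ≤ v := hv ⟨_, rfl⟩
      rw [hFx] at hle
      have : v < iW (hT.lev x) := lt_iW_iff.2 (hT.lt_lev_iff.2 hxn)
      exact absurd hle (not_le.2 this)
    have hCclub : hT.Club (A₁ ∪ B₁) := by
      refine ⟨hA₁c.union hB₁c, fun hbdd => hA₁u (hT.bdd_mono Set.subset_union_left hbdd)⟩
    obtain ⟨a, ha⟩ := hf (A₁ ∪ B₁) hCclub F hFc hFu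
    obtain ⟨x, hxA₁, hxn⟩ := hT.unbdd_exists hA₁u a
    exact hxn (ha ⟨x, Or.inl hxA₁⟩ (if_pos hxA₁))
  · -- Case 1: s is unbounded on B \ seq a₀; glue 0 on A with s on B
    set A₁ : Set X := A \ hT.seq a₀ with hA₁
    set B₁ : Set X := B \ hT.seq a₀ with hB₁
    have hd : A₁ ∩ B₁ = ∅ := by
      rw [Set.eq_empty_iff_forall_notMem]
      rintro x ⟨⟨hxA, hxn⟩, ⟨hxB, -⟩⟩
      exact hxn (hab ⟨hxA, hxB⟩)
    have hA₁c : IsClosed A₁ := hA.1.sdiff (hT.isOpen a₀)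
    have hB₁c : IsClosed B₁ := hB.1.sdiff (hT.isOpen a₀)
    have hA₁u : ¬ hT.Bdd A₁ := hT.unbdd_diff hA.2 a₀
    set F := fun x : ↥(A₁ ∪ B₁) => if (x : X) ∈ A₁ then lrZero else s (x : X) with hFdef
    have hFc : Continuous F :=
      glue_continuous hA₁c hB₁c hd (fun x => s (x : X)) (hs_cont.comp continuous_subtype_val)
    have hFu : ¬ BddAbove (Set.range F) := by
      intro hbdd
      apply hsb
      apply hbdd.mono
      rintro y ⟨x, hxB₁, rfl⟩
      have hxA₁ : x ∉ A₁ := fun hxA₁ =>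
        Set.eq_empty_iff_forall_notMem.1 hd x ⟨hxA₁, hxB₁⟩
      exact ⟨⟨x, Or.inr hxB₁⟩, if_neg hxA₁⟩
    have hCclub : hT.Club (A₁ ∪ B₁) := by
      refine ⟨hA₁c.union hB₁c, fun hbdd => hA₁u (hT.bdd_mono Set.subset_union_left hbdd)⟩
    obtain ⟨a, ha⟩ := hf (A₁ ∪ B₁) hCclub F hFc hFu
    obtain ⟨x, hxA₁, hxn⟩ := hT.unbdd_exists hA₁u a
    exact hxn (ha ⟨x, Or.inl hxA₁⟩ (if_pos hxA₁))

end PartFB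

/-- Relations between conditions (b), (e), (f), (h) of Theorem 6.1. -/
theorem stmt_15 {X : Type u} [TopologicalSpace X] [T2Space X] (hT : TypeI X)
    (hs : ∃ s : X → LongRay, hT.Slicer s) :
    ((∀ A B : Set X, hT.Club A → hT.Club B → hT.Club (A ∩ B)) →
      ∀ C : Set X, hT.Club C → DirInItself hT C) ∧
    ((∀ g : X → ℝ, Continuous g → ∃ (a : W) (c : ℝ), ∀ x ∉ hT.seq a, g x = c) →
      DirInItself hT Set.univ) ∧
    ((∀ C : Set X, hT.Club C → DirInItself hT C) →
      ∀ A B : Set X, hT.Club A → hT.Club B → hT.Club (A ∩ B)) :=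
  ⟨fun hb => part_bf hT hb, fun he => part_eh hT he, fun hfd => part_fb hT hs hfd⟩

end
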